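/- arXiv:2503.19137 — 2 statements merged into one kernel-verified Lean document; each statement's English description precedes it below -/
import Mathlib

section
/- Let κ, γ > 0 and 0 < τ₁ < τ₂, 0 < θ₁ < θ₂. Define A = (3κτ₂θ₁ + 4γτ₁θ₂)/(3κ+4γ) and B = (3κ(τ₂+θ₁) + 4γ(τ₁+θ₂))/(3κ+4γ). Then B² − 4A = [(3κ(τ₂−θ₁) + 4γ(τ₁−θ₂))² + 48κγ(τ₁−τ₂)(θ₁−θ₂)]/(3κ+4γ)² > 0, so the quadratic Az² − Bz + 1 has two distinct real roots, and both roots are positive. -/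
theorem stmt6 (κ γ τ₁ τ₂ θ₁ θ₂ : ℝ) (hκ : 0 < κ) (hγ : 0 < γ)
    (hτ1 : 0 < τ₁) (hτ : τ₁ < τ₂) (hθ1 : 0 < θ₁) (hθ : θ₁ < θ₂)
    (A B : ℝ)
    (hA : A = (3*κ*τ₂*θ₁ + 4*γ*τ₁*θ₂) / (3*κ + 4*γ))
    (hB : B = (3*κ*(τ₂ + θ₁) + 4*γ*(τ₁ + θ₂)) / (3*κ + 4*γ)) :
    B^2 - 4*A
      = ((3*κ*(τ₂ - θ₁) + 4*γ*(τ₁ - θ₂))^2 + 48*κ*γ*(τ₁ - τ₂)*(θ₁ - θ₂)) / (3*κ + 4*γ)^2 ∧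
    0 < B^2 - 4*A ∧
    ∃ z₁ z₂ : ℝ, 0 < z₂ ∧ z₂ < z₁ ∧
      A*z₁^2 - B*z₁ + 1 = 0 ∧ A*z₂^2 - B*z₂ + 1 = 0 := by
  have hs : (0:ℝ) < 3*κ + 4*γ := by positivity
  have hτ2 : 0 < τ₂ := hτ1.trans hτ
  have hθ2 : 0 < θ₂ := hθ1.trans hθ
  have hApos : 0 < A := by rw [hA]; positivity
  have hBpos : 0 < B := by rw [hB]; positivity
  have heq : B^2 - 4*A
      = ((3*κ*(τ₂ - θ₁) + 4*γ*(τ₁ - θ₂))^2 + 48*κ*γ*(τ₁ - τ₂)*(θ₁ - θ₂)) / (3*κ + 4*γ)^2 := by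
    rw [hA, hB]; field_simp; ring
  have hD : 0 < B^2 - 4*A := by
    rw [heq]
    apply div_pos
    · nlinarith [sq_nonneg (3*κ*(τ₂ - θ₁) + 4*γ*(τ₁ - θ₂)), mul_pos hκ hγ,
        mul_pos (mul_pos hκ hγ) (mul_pos (sub_pos.mpr hτ) (sub_pos.mpr hθ))]
    · positivity
  set D := B^2 - 4*A with hDdef
  have hsq : Real.sqrt D ^ 2 = D := Real.sq_sqrt hD.le
  have hsqpos : 0 < Real.sqrt D := Real.sqrt_pos.mpr hD
  have hlt : Real.sqrt D < B := by nlinarith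
  refine ⟨heq, hD, (B + Real.sqrt D)/(2*A), (B - Real.sqrt D)/(2*A), ?_, ?_, ?_, ?_⟩
  · apply div_pos (by linarith) (by linarith)
  · apply (div_lt_div_iff_of_pos_right (by linarith : (0:ℝ) < 2*A)).mpr; linarith
  · field_simp
    nlinarith [hsq]
  · field_simp
    nlinarith [hsq]
end

section
/- Under the assumptions κ, γ > 0, 0 < τ₁ < τ₂, 0 < θ₁ < θ₂, with D(z) = Az² − Bz + 1 where A = (3κτ₂θ₁ + 4γτ₁θ₂)/(3κ+4γ) and B = (3κ(τ₂+θ₁)+4γ(τ₁+θ₂))/(3κ+4γ), one has D(1/τ₁) = 3κ(θ₁−τ₁)(τ₂−τ₁)/((3κ+4γ)τ₁²) and D(1/θ₁) = −4γ(θ₁−τ₁)(θ₂−θ₁)/((3κ+4γ)θ₁²). Consequently, if τ₁ ≠ θ₁ then D(1/τ₁) and D(1/θ₁) have opposite signs. -/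
theorem stmt7 (κ γ τ₁ τ₂ θ₁ θ₂ : ℝ) (hκ : 0 < κ) (hγ : 0 < γ)
    (hτ1 : 0 < τ₁) (hτ : τ₁ < τ₂) (hθ1 : 0 < θ₁) (hθ : θ₁ < θ₂)
    (A B : ℝ)
    (hA : A = (3*κ*τ₂*θ₁ + 4*γ*τ₁*θ₂) / (3*κ + 4*γ))
    (hB : B = (3*κ*(τ₂ + θ₁) + 4*γ*(τ₁ + θ₂)) / (3*κ + 4*γ))
    (D : ℝ → ℝ) (hD : ∀ z, D z = A*z^2 - B*z + 1) :
    D (1/τ₁) = 3*κ*(θ₁ - τ₁)*(τ₂ - τ₁) / ((3*κ + 4*γ) * τ₁^2) ∧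
    D (1/θ₁) = -(4*γ*(θ₁ - τ₁)*(θ₂ - θ₁)) / ((3*κ + 4*γ) * θ₁^2) ∧
    (τ₁ ≠ θ₁ → D (1/τ₁) * D (1/θ₁) < 0) := by
  have hden : (3*κ + 4*γ) ≠ 0 := by positivity
  have ht1 : τ₁ ≠ 0 := ne_of_gt hτ1
  have hth1 : θ₁ ≠ 0 := ne_of_gt hθ1
  have h1 : D (1/τ₁) = 3*κ*(θ₁ - τ₁)*(τ₂ - τ₁) / ((3*κ + 4*γ) * τ₁^2) := by
    rw [hD, hA, hB]; field_simp; ring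
  have h2 : D (1/θ₁) = -(4*γ*(θ₁ - τ₁)*(θ₂ - θ₁)) / ((3*κ + 4*γ) * θ₁^2) := by
    rw [hD, hA, hB]; field_simp; ring
  refine ⟨h1, h2, fun hne => ?_⟩
  rw [h1, h2]
  rcases lt_or_gt_of_ne hne with h | h
  · have hp := mul_pos (mul_pos (mul_pos hκ (sub_pos.mpr h)) (sub_pos.mpr hτ)) hγ
    have ha : 0 < 3*κ*(θ₁ - τ₁)*(τ₂ - τ₁) / ((3*κ + 4*γ) * τ₁^2) :=
      div_pos (by nlinarith) (by positivity)
    have hb : -(4*γ*(θ₁ - τ₁)*(θ₂ - θ₁)) / ((3*κ + 4*γ) * θ₁^2) < 0 :=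
      div_neg_of_neg_of_pos (by nlinarith [mul_pos (mul_pos hγ (sub_pos.mpr h)) (sub_pos.mpr hθ)]) (by positivity)
    exact mul_neg_of_pos_of_neg ha hb
  · have hp := mul_pos (mul_pos (mul_pos hκ (sub_pos.mpr h)) (sub_pos.mpr hτ)) hγ
    have ha : 3*κ*(θ₁ - τ₁)*(τ₂ - τ₁) / ((3*κ + 4*γ) * τ₁^2) < 0 :=
      div_neg_of_neg_of_pos (by nlinarith [mul_pos (mul_pos hκ (sub_pos.mpr h)) (sub_pos.mpr (h.trans hτ))]) (by positivity)
    have hb : 0 < -(4*γ*(θ₁ - τ₁)*(θ₂ - θ₁)) / ((3*κ + 4*γ) * θ₁^2) :=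
      div_pos (by nlinarith [mul_pos (mul_pos hγ (sub_pos.mpr h)) (sub_pos.mpr hθ)]) (by positivity)
    exact mul_neg_of_neg_of_pos ha hb
end
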